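/- arXiv:math/9805141 — 7 statements merged into one kernel-verified Lean document; each statement's English description precedes it below -/
import Mathlib

section
/- Let N ≥ 2, m₀ ∈ L^∞(𝕋), h ∈ L¹(𝕋) with h ≥ 0, and let L²(h) = L²(𝕋, h dμ). Define S₀ on L²(h) by (S₀ξ)(z) = m₀(z) ξ(z^N). Then S₀ is an isometry on L²(h) if and only if R(h) = h, where R is the Ruelle operator associated to m₀. -/
open MeasureTheory Filter Set
open scoped Real ENNReal

/-- The Ruelle transfer operator of order `N` with filter `m₀`, on complex
functions on the circle (encoded as `1`-periodic functions on `ℝ`):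
`(Rf)(x) = (1/N) ∑_{k<N} |m₀((x+k)/N)|² f((x+k)/N)`. -/
noncomputable def ruelle (N : ℕ) (m₀ : ℝ → ℂ) (f : ℝ → ℂ) : ℝ → ℂ :=
  fun x => (N : ℂ)⁻¹ *
    ∑ k ∈ Finset.range N, (‖m₀ ((x + k) / N)‖ : ℂ) ^ 2 * f ((x + k) / N)

/-- The Ruelle transfer operator acting on real-valued functions. -/
noncomputable def ruelleR (N : ℕ) (m₀ : ℝ → ℂ) (h : ℝ → ℝ) : ℝ → ℝ :=
  fun x => (N : ℝ)⁻¹ *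
    ∑ k ∈ Finset.range N, ‖m₀ ((x + k) / N)‖ ^ 2 * h ((x + k) / N)

/-!
Cutting `(0, 1]` into the intervals `(k/N, (k+1)/N]` and substituting `x = (y + k)/N` on each one
turns `∫ |m₀ x|² |ξ (N x)|² h x dx` into `∫ |ξ y|² (R h)(y) dy`, because `ξ` is `1`-periodic.
Hence `S₀` is an isometry iff `∫ |ξ|² R h = ∫ |ξ|² h` for all periodic `ξ`. Testing with indicators
of `1`-periodic sets (for which both sides are finite, `m₀` being bounded) shows that `R h = h`
almost everywhere on `(0, 1]`, hence on all of `ℝ` by periodicity.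
-/

open Function

lemma map_volume_add_div {a c : ℝ} (hc : 0 < c) :
    Measure.map (fun y : ℝ => (y + a) / c) volume = ENNReal.ofReal c • volume := by
  have hcomp : (fun y : ℝ => (y + a) / c) = (· + a / c) ∘ (c⁻¹ * ·) := by
    funext y; simp only [comp_apply]; ring
  rw [hcomp, ← Measure.map_map (measurable_add_const _) (measurable_const_mul _),
    Real.map_volume_mul_left (inv_ne_zero hc.ne'), Measure.map_smul, map_add_right_eq_self,
    inv_inv, abs_of_pos hc]

lemma setLIntegral_Ioc_comp_add_div {F : ℝ → ℝ≥0∞} (hF : Measurable F) {c : ℝ} (hc : 0 < c)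
    (a : ℝ) :
    ∫⁻ y in Ioc 0 1, F ((y + a) / c)
      = ENNReal.ofReal c * ∫⁻ x in Ioc (a / c) ((a + 1) / c), F x := by
  have hpre : (fun y : ℝ => (y + a) / c) ⁻¹' Ioc (a / c) ((a + 1) / c) = Ioc 0 1 := by
    ext y
    simp only [mem_preimage, mem_Ioc, div_lt_div_iff_of_pos_right hc,
      div_le_div_iff_of_pos_right hc]
    constructor <;> rintro ⟨h₁, h₂⟩ <;> constructor <;> linarith
  rw [← smul_eq_mul, ← lintegral_smul_measure, ← Measure.restrict_smul,
    ← map_volume_add_div (a := a) hc, setLIntegral_map measurableSet_Ioc hF (by fun_prop), hpre]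

lemma sum_setLIntegral_Ioc_of_monotone {a : ℕ → ℝ} (ha : Monotone a) (F : ℝ → ℝ≥0∞)
    (n : ℕ) :
    ∑ k ∈ Finset.range n, ∫⁻ x in Ioc (a k) (a (k + 1)), F x
      = ∫⁻ x in Ioc (a 0) (a n), F x := by
  induction n with
  | zero => simp
  | succ n ih =>
    rw [Finset.sum_range_succ, ih, ← lintegral_union measurableSet_Ioc
      (Ioc_disjoint_Ioc_of_le le_rfl), Ioc_union_Ioc_eq_Ioc (ha n.zero_le) (ha n.le_succ)]

lemma setLIntegral_Ioc_zero_one_eq_inv_mul_sum {N : ℕ} (hN : 0 < N) {F : ℝ → ℝ≥0∞}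
    (hF : Measurable F) :
    ∫⁻ x in Ioc 0 1, F x
      = (N : ℝ≥0∞)⁻¹ * ∑ k ∈ Finset.range N, ∫⁻ y in Ioc 0 1, F ((y + k) / N) := by
  have hN' : (0 : ℝ) < N := by exact_mod_cast hN
  have hsum := sum_setLIntegral_Ioc_of_monotone
    (fun _ _ hkl => div_le_div_of_nonneg_right (Nat.cast_le.2 hkl) hN'.le) F N
  simp only [CharP.cast_eq_zero, zero_div, div_self hN'.ne', Nat.cast_succ] at hsum
  simp_rw [setLIntegral_Ioc_comp_add_div hF hN', ENNReal.ofReal_natCast, ← Finset.mul_sum,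
    hsum, ← mul_assoc, ENNReal.inv_mul_cancel (Nat.cast_ne_zero.2 hN.ne')
      (ENNReal.natCast_ne_top N), one_mul]

lemma Function.Periodic.ae_eq_of_ae_eq_restrict_Ioc {α : Type*} {f g : ℝ → α} {T : ℝ}
    (hT : 0 < T) (hf : Periodic f T) (hg : Periodic g T) (t : ℝ)
    (hfg : f =ᵐ[volume.restrict (Ioc t (t + T))] g) : f =ᵐ[volume] g := by
  refine (isAddFundamentalDomain_Ioc hT t).measure_zero_of_invariant _
    (fun ⟨_, n, hn⟩ => ?_) ?_
  · ext x
    subst hn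
    simp only [mem_vadd_set_iff_neg_vadd_mem, AddSubgroup.vadd_def, vadd_eq_add,
      AddSubgroup.coe_neg, neg_add_eq_sub, mem_compl_iff, mem_ofPred, hf.sub_zsmul_eq,
      hg.sub_zsmul_eq]
  · rwa [← Measure.restrict_apply' measurableSet_Ioc]

lemma ae_restrict_Ioc_eq_of_forall_lintegral_indicator_fract_eq {f g : ℝ → ℝ≥0∞}
    (hf : Measurable f) (hg : Measurable g)
    (hfg : ∀ s, MeasurableSet s → ∫⁻ x in Ioc 0 1, (Int.fract ⁻¹' s).indicator f x
      = ∫⁻ x in Ioc 0 1, (Int.fract ⁻¹' s).indicator g x) :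
    f =ᵐ[volume.restrict (Ioc 0 1)] g := by
  have hfract : ∀ᵐ x ∂volume.restrict (Ioc (0 : ℝ) 1), Int.fract x = x := by
    rw [← Measure.restrict_congr_set Ioo_ae_eq_Ioc]
    filter_upwards [ae_restrict_mem measurableSet_Ioo] with x hx
    exact Int.fract_eq_self.2 ⟨hx.1.le, hx.2⟩
  have hindicator (s : Set ℝ) (u : ℝ → ℝ≥0∞) :
      (Int.fract ⁻¹' s).indicator u =ᵐ[volume.restrict (Ioc 0 1)] s.indicator u := by
    filter_upwards [hfract] with x hx
    classical
    simp [indicator_apply, hx]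
  refine ae_eq_of_forall_setLIntegral_eq_of_sigmaFinite hf hg fun s hs _ => ?_
  rw [← lintegral_indicator hs, ← lintegral_indicator hs, ← lintegral_congr_ae (hindicator s f),
    ← lintegral_congr_ae (hindicator s g), hfg s hs]

lemma Integrable.norm_sq_mul_of_ae_norm_le {α E : Type*} [MeasurableSpace α]
    [NormedAddCommGroup E] {μ : Measure α} {h : α → ℝ} (hh : Integrable h μ)
    (hpos : ∀ᵐ x ∂μ, 0 ≤ h x) {g : α → E} (hg : AEStronglyMeasurable g μ) {C : ℝ}
    (hgC : ∀ᵐ x ∂μ, ‖g x‖ ≤ C) : Integrable (fun x => ‖g x‖ ^ 2 * h x) μ := by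
  refine (hh.const_mul (C ^ 2)).mono' ((hg.norm.pow 2).mul hh.1) ?_
  filter_upwards [hpos, hgC] with x hx hxC
  rw [norm_mul, norm_pow, norm_norm, Real.norm_of_nonneg hx]
  exact mul_le_mul_of_nonneg_right (pow_le_pow_left₀ (norm_nonneg _) hxC 2) hx

lemma ofReal_norm_indicator_one_sq_mul {α : Type*} (s : Set α) (f : α → ℝ) (x : α) :
    ENNReal.ofReal (‖s.indicator (1 : α → ℂ) x‖ ^ 2 * f x)
      = s.indicator (fun y => ENNReal.ofReal (f y)) x := by
  by_cases hx : x ∈ s <;> simp [hx]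

section Ruelle

variable {N : ℕ} {m₀ : ℝ → ℂ} {h : ℝ → ℝ}

lemma measurable_ruelleR (hm : Measurable m₀) (hh : Measurable h) :
    Measurable (ruelleR N m₀ h) := by
  unfold ruelleR
  fun_prop

lemma ruelleR_nonneg (hpos : ∀ x, 0 ≤ h x) (x : ℝ) : 0 ≤ ruelleR N m₀ h x :=
  mul_nonneg (by positivity) (Finset.sum_nonneg fun _ _ => mul_nonneg (by positivity) (hpos _))

lemma periodic_ruelleR (hN : 0 < N) (hmper : Periodic m₀ 1) (hhper : Periodic h 1) :
    Periodic (ruelleR N m₀ h) 1 := by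
  intro x
  set u : ℕ → ℝ := fun k => ‖m₀ ((x + k) / N)‖ ^ 2 * h ((x + k) / N)
  have hu : u N = u 0 := by
    have hxN : (x + N) / N = (x + (0 : ℕ)) / N + 1 := by
      field_simp [(Nat.cast_pos.2 hN).ne']; push_cast; ring
    simp only [u, hxN, hmper _, hhper _]
  have hshift : ∑ k ∈ Finset.range N, u (k + 1) = ∑ k ∈ Finset.range N, u k := by
    linarith [Finset.sum_range_succ' u N, Finset.sum_range_succ u N]
  simp only [ruelleR, ← hshift, u, Nat.cast_succ, add_assoc, add_comm (1 : ℝ)]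

lemma ofReal_mul_ruelleR (hN : 0 < N) (hpos : ∀ x, 0 ≤ h x) {a : ℝ} (ha : 0 ≤ a) (y : ℝ) :
    ENNReal.ofReal (a * ruelleR N m₀ h y) = (N : ℝ≥0∞)⁻¹ * ∑ k ∈ Finset.range N,
      ENNReal.ofReal (‖m₀ ((y + k) / N)‖ ^ 2 * a * h ((y + k) / N)) := by
  rw [ruelleR, mul_left_comm, ENNReal.ofReal_mul (by positivity), Finset.mul_sum,
    ENNReal.ofReal_sum_of_nonneg fun k _ => by have := hpos ((y + k) / N); positivity,
    ENNReal.ofReal_inv_of_pos (Nat.cast_pos.2 hN), ENNReal.ofReal_natCast]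
  simp only [mul_left_comm a, mul_assoc]

lemma setLIntegral_norm_mul_comp_sq_eq_ruelleR (hN : 0 < N) (hm : Measurable m₀)
    (hh : Measurable h) (hpos : ∀ x, 0 ≤ h x) {ξ : ℝ → ℂ} (hξ : Measurable ξ)
    (hξper : Periodic ξ 1) :
    ∫⁻ x in Ioc 0 1, ENNReal.ofReal (‖m₀ x * ξ (N * x)‖ ^ 2 * h x)
      = ∫⁻ y in Ioc 0 1, ENNReal.ofReal (‖ξ y‖ ^ 2 * ruelleR N m₀ h y) := by
  have hN' : (N : ℝ) ≠ 0 := Nat.cast_ne_zero.2 hN.ne'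
  have hshift (k : ℕ) (y : ℝ) : ξ (N * ((y + k) / N)) = ξ y := by
    rw [mul_div_cancel₀ _ hN']
    simpa using hξper.nat_mul k y
  simp_rw [ofReal_mul_ruelleR hN hpos (sq_nonneg ‖ξ _‖)]
  rw [setLIntegral_Ioc_zero_one_eq_inv_mul_sum hN (by fun_prop),
    lintegral_const_mul _ (by fun_prop), lintegral_finsetSum _ fun k _ => by fun_prop]
  simp only [hshift, norm_mul, mul_pow]

lemma integral_norm_mul_comp_sq_eq_of_ruelleR_ae_eq (hN : 0 < N) (hm : Measurable m₀)
    (hh : Measurable h) (hpos : ∀ x, 0 ≤ h x) (hR : ruelleR N m₀ h =ᵐ[volume] h) {ξ : ℝ → ℂ}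
    (hξ : Measurable ξ) (hξper : Periodic ξ 1) :
    ∫ x in Ioc 0 1, ‖m₀ x * ξ (N * x)‖ ^ 2 * h x = ∫ x in Ioc 0 1, ‖ξ x‖ ^ 2 * h x := by
  have hnonneg (g : ℝ → ℂ) : 0 ≤ᵐ[volume.restrict (Ioc 0 1)] fun x => ‖g x‖ ^ 2 * h x :=
    .of_forall fun x => mul_nonneg (sq_nonneg _) (hpos x)
  rw [integral_eq_lintegral_of_nonneg_ae (hnonneg _) (by fun_prop),
    integral_eq_lintegral_of_nonneg_ae (hnonneg _) (by fun_prop),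
    setLIntegral_norm_mul_comp_sq_eq_ruelleR hN hm hh hpos hξ hξper]
  congr 1
  refine lintegral_congr_ae (ae_restrict_of_ae ?_)
  filter_upwards [hR] with y hy
  rw [hy]

lemma setLIntegral_norm_sq_mul_ruelleR_eq_of_integral_eq (hN : 0 < N) (hm : Measurable m₀)
    (hmb : ∃ C, ∀ᵐ x ∂volume, ‖m₀ x‖ ≤ C) (hh : Measurable h) (hpos : ∀ x, 0 ≤ h x)
    (hhi : IntegrableOn h (Ioc 0 1)) {ξ : ℝ → ℂ} (hξ : Measurable ξ) (hξper : Periodic ξ 1)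
    (hξ_le : ∀ x, ‖ξ x‖ ≤ 1)
    (hiso : IntegrableOn (fun x => ‖ξ x‖ ^ 2 * h x) (Ioc 0 1) →
      ∫ x in Ioc 0 1, ‖m₀ x * ξ (N * x)‖ ^ 2 * h x = ∫ x in Ioc 0 1, ‖ξ x‖ ^ 2 * h x) :
    ∫⁻ y in Ioc 0 1, ENNReal.ofReal (‖ξ y‖ ^ 2 * ruelleR N m₀ h y)
      = ∫⁻ y in Ioc 0 1, ENNReal.ofReal (‖ξ y‖ ^ 2 * h y) := by
  obtain ⟨C, hC⟩ := hmb
  have hint : IntegrableOn (fun x => ‖ξ x‖ ^ 2 * h x) (Ioc 0 1) :=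
    Integrable.norm_sq_mul_of_ae_norm_le hhi (.of_forall hpos) hξ.aestronglyMeasurable
      (.of_forall hξ_le)
  have hint' : IntegrableOn (fun x => ‖m₀ x * ξ (N * x)‖ ^ 2 * h x) (Ioc 0 1) := by
    refine Integrable.norm_sq_mul_of_ae_norm_le hhi (.of_forall hpos) (by fun_prop) (C := C) ?_
    filter_upwards [ae_restrict_of_ae hC] with x hx
    rw [norm_mul]
    exact (mul_le_of_le_one_right (norm_nonneg _) (hξ_le _)).trans hx
  have hnonneg (g : ℝ → ℂ) : 0 ≤ᵐ[volume.restrict (Ioc 0 1)] fun x => ‖g x‖ ^ 2 * h x :=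
    .of_forall fun x => mul_nonneg (sq_nonneg _) (hpos x)
  rw [← setLIntegral_norm_mul_comp_sq_eq_ruelleR hN hm hh hpos hξ hξper,
    ← ofReal_integral_eq_lintegral_ofReal hint' (hnonneg _),
    ← ofReal_integral_eq_lintegral_ofReal hint (hnonneg _), hiso hint]

lemma ruelleR_ae_eq_of_integral_norm_mul_comp_sq_eq (hN : 0 < N) (hm : Measurable m₀)
    (hmper : Periodic m₀ 1) (hmb : ∃ C, ∀ᵐ x ∂volume, ‖m₀ x‖ ≤ C) (hh : Measurable h)
    (hhper : Periodic h 1) (hpos : ∀ x, 0 ≤ h x) (hhi : IntegrableOn h (Ioc 0 1))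
    (hiso : ∀ ξ : ℝ → ℂ, Measurable ξ → Periodic ξ 1 →
      IntegrableOn (fun x => ‖ξ x‖ ^ 2 * h x) (Ioc 0 1) →
      ∫ x in Ioc 0 1, ‖m₀ x * ξ (N * x)‖ ^ 2 * h x = ∫ x in Ioc 0 1, ‖ξ x‖ ^ 2 * h x) :
    ruelleR N m₀ h =ᵐ[volume] h := by
  refine (periodic_ruelleR hN hmper hhper).ae_eq_of_ae_eq_restrict_Ioc one_pos hhper 0 ?_
  rw [zero_add]
  suffices hofReal : (fun x => ENNReal.ofReal (ruelleR N m₀ h x))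
      =ᵐ[volume.restrict (Ioc 0 1)] fun x => ENNReal.ofReal (h x) by
    filter_upwards [hofReal] with x hx
    exact (ENNReal.ofReal_eq_ofReal_iff (ruelleR_nonneg hpos x) (hpos x)).1 hx
  refine ae_restrict_Ioc_eq_of_forall_lintegral_indicator_fract_eq
    (measurable_ruelleR hm hh).ennreal_ofReal hh.ennreal_ofReal fun s hs => ?_
  set ξ : ℝ → ℂ := (Int.fract ⁻¹' s).indicator 1
  have hξ : Measurable ξ := measurable_one.indicator (measurable_fract hs)
  have hξper : Periodic ξ 1 := fun x => by
    classical
    simp [ξ, indicator_apply, Int.fract_add_one]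
  have hξ_le (x : ℝ) : ‖ξ x‖ ≤ 1 := norm_indicator_le_norm_self _ x |>.trans (by simp)
  simpa only [ξ, ofReal_norm_indicator_one_sq_mul] using
    setLIntegral_norm_sq_mul_ruelleR_eq_of_integral_eq hN hm hmb hh hpos hhi hξ hξper hξ_le
      (hiso ξ hξ hξper)

end Ruelle

/-- `S₀ξ(z) = m₀(z)ξ(z^N)` is an isometry of `L²(h)` iff `R(h) = h`. -/
theorem stmt3 (N : ℕ) (hN : 2 ≤ N) (m₀ : ℝ → ℂ) (hm : Measurable m₀)
    (hmper : Function.Periodic m₀ 1) (hmb : ∃ C, ∀ᵐ x ∂volume, ‖m₀ x‖ ≤ C)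
    (h : ℝ → ℝ) (hhm : Measurable h) (hhper : Function.Periodic h 1)
    (hpos : ∀ x, 0 ≤ h x) (hhi : IntegrableOn h (Set.Ioc (0:ℝ) 1)) :
    (∀ ξ : ℝ → ℂ, Measurable ξ → Function.Periodic ξ 1 →
        IntegrableOn (fun x => ‖ξ x‖ ^ 2 * h x) (Set.Ioc (0:ℝ) 1) →
        ∫ x in Set.Ioc (0:ℝ) 1, ‖m₀ x * ξ (N * x)‖ ^ 2 * h x
          = ∫ x in Set.Ioc (0:ℝ) 1, ‖ξ x‖ ^ 2 * h x)
      ↔ ruelleR N m₀ h =ᵐ[volume] h := by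
  have hN₀ : 0 < N := by omega
  exact ⟨ruelleR_ae_eq_of_integral_norm_mul_comp_sq_eq hN₀ hm hmper hmb hhm hhper hpos hhi,
    fun hR _ hξ hξper _ =>
      integral_norm_mul_comp_sq_eq_of_ruelleR_ae_eq hN₀ hm hhm hpos hR hξ hξper⟩
end

section
/- Let N ≥ 2 and let m₀, m₀' be measurable functions on 𝕋 with m₀ ∈ L^∞(𝕋), and suppose f is a measurable function on 𝕋 satisfying the cocycle relation f(z^N) m₀'(z) = f(z) m₀(z) for a.e. z ∈ 𝕋, and suppose m₀' satisfies the quadrature condition (1/N)∑_{w^N=z} |m₀'(w)|² = 1 a.e. Then h := |f|² satisfies R_{m₀}(h) = h, where R_{m₀} is the Ruelle operator of m₀. -/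
open MeasureTheory Filter Set
open scoped Real ENNReal

lemma ae_comp_affine {P : ℝ → Prop} (c d : ℝ) (hc : c ≠ 0)
    (h : ∀ᵐ x ∂volume, P x) : ∀ᵐ x ∂volume, P (c * x + d) := by
  rw [ae_iff] at h ⊢
  have : {x : ℝ | ¬ P (c * x + d)} = (c * ·) ⁻¹' ((· + d) ⁻¹' {x | ¬ P x}) := rfl
  rw [this, Real.volume_preimage_mul_left hc]
  have : volume ((· + d) ⁻¹' {x : ℝ | ¬ P x}) = volume {x : ℝ | ¬ P x} := by
    exact measure_preimage_add_right volume d _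
  rw [this, h, mul_zero]

/-- a cocycle equivalence `f(z^N)m₀'(z) = f(z)m₀(z)` with `m₀'`
satisfying the quadrature condition yields `R_{m₀}(|f|²) = |f|²`. -/
theorem stmt6 (N : ℕ) (hN : 2 ≤ N) (m₀ m₀' : ℝ → ℂ) (hm : Measurable m₀)
    (hmb : ∃ C, ∀ᵐ x ∂volume, ‖m₀ x‖ ≤ C)
    (f : ℝ → ℂ) (hfm : Measurable f) (hfper : Function.Periodic f 1)
    (hfL1 : IntegrableOn (fun x => ‖f x‖ ^ 2) (Set.Ioc (0:ℝ) 1))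
    (hcoc : ∀ᵐ x ∂volume, f (N * x) * m₀' x = f x * m₀ x)
    (hqmf : ∀ᵐ x ∂volume,
      (N : ℝ)⁻¹ * ∑ k ∈ Finset.range N, ‖m₀' ((x + k) / N)‖ ^ 2 = 1) :
    ruelleR N m₀ (fun x => ‖f x‖ ^ 2) =ᵐ[volume] fun x => ‖f x‖ ^ 2 := by
  have hN0 : (N : ℝ) ≠ 0 := by positivity
  have hc : ∀ k : ℕ, ∀ᵐ x ∂volume,
      f (N * ((x + k) / N)) * m₀' ((x + k) / N) = f ((x + k) / N) * m₀ ((x + k) / N) := by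
    intro k
    have := ae_comp_affine (P := fun z => f (N * z) * m₀' z = f z * m₀ z)
      ((N:ℝ)⁻¹) (k / N) (by positivity) hcoc
    filter_upwards [this] with x hx
    have : (x + (k:ℝ)) / N = (N:ℝ)⁻¹ * x + k / N := by field_simp
    rw [this]; exact hx
  have hall : ∀ᵐ x ∂volume, ∀ k : ℕ,
      f (N * ((x + k) / N)) * m₀' ((x + k) / N) = f ((x + k) / N) * m₀ ((x + k) / N) :=
    ae_all_iff.2 hc
  filter_upwards [hall, hqmf] with x hx hq
  have key : ∀ k : ℕ, ‖f x‖ ^ 2 * ‖m₀' ((x + k) / N)‖ ^ 2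
      = ‖m₀ ((x + k) / N)‖ ^ 2 * ‖f ((x + k) / N)‖ ^ 2 := by
    intro k
    have h1 := hx k
    have h2 : (N : ℝ) * ((x + k) / N) = x + k := by field_simp
    have hp : f (x + (k:ℝ)) = f x := by simpa using (hfper.nat_mul k) x
    rw [h2, hp] at h1
    have h3 := congrArg (fun z : ℂ => ‖z‖ ^ 2) h1
    simp only [norm_mul, mul_pow] at h3
    linarith
  simp only [ruelleR]
  calc (N : ℝ)⁻¹ * ∑ k ∈ Finset.range N, ‖m₀ ((x + k) / N)‖ ^ 2 * ‖f ((x + k) / N)‖ ^ 2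
      = (N : ℝ)⁻¹ * ∑ k ∈ Finset.range N, ‖f x‖ ^ 2 * ‖m₀' ((x + k) / N)‖ ^ 2 := by
        rw [Finset.sum_congr rfl fun k _ => (key k).symm]
    _ = ‖f x‖ ^ 2 * ((N : ℝ)⁻¹ * ∑ k ∈ Finset.range N, ‖m₀' ((x + k) / N)‖ ^ 2) := by
        rw [← Finset.mul_sum]; ring
    _ = ‖f x‖ ^ 2 := by rw [hq, mul_one]
end

section
/- Let N ≥ 2, m₀ ∈ L^∞(𝕋), and h ∈ L¹(𝕋) with h ≥ 0, h ≠ 0, and R_{m₀}(h) = h. Set v(z) := h(z)^{1/2} m₀(z). Then for a.e. z with h(z^N) = 0, one has v(z) = 0; consequently m₀'(z) := v(z)/h(z^N)^{1/2} (defined to be 0 where h(z^N)=0) satisfies (1/N) ∑_{w^N=z} |m₀'(w)|² = 1 for a.e. z in the set where h > 0. -/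
open MeasureTheory Filter Set
open scoped Real ENNReal

/-- `v(z) = h(z)^{1/2} m₀(z)`. -/
noncomputable def vfun (m₀ : ℝ → ℂ) (h : ℝ → ℝ) : ℝ → ℂ :=
  fun x => (Real.sqrt (h x) : ℂ) * m₀ x

/-- `m₀'(z) = v(z)/h(z^N)^{1/2}`, defined to be `0` where `h(z^N) = 0`. -/
noncomputable def mprime (N : ℕ) (m₀ : ℝ → ℂ) (h : ℝ → ℝ) : ℝ → ℂ :=
  fun x => if h (N * x) = 0 then 0
    else vfun m₀ h x / (Real.sqrt (h (N * x)) : ℂ)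

theorem Real.ae_comp_const_mul {p : ℝ → Prop} {c : ℝ} (hc : c ≠ 0) (hp : ∀ᵐ x, p x) :
    ∀ᵐ x, p (c * x) := by
  rw [ae_iff] at hp ⊢
  exact (Real.volume_preimage_mul_left hc {y | ¬ p y}).trans (by rw [hp, mul_zero])

section TransferOperator

variable {m₀ : ℝ → ℂ} {h : ℝ → ℝ}

theorem norm_vfun_sq {x : ℝ} (hx : 0 ≤ h x) : ‖vfun m₀ h x‖ ^ 2 = ‖m₀ x‖ ^ 2 * h x := by
  rw [vfun, norm_mul, Complex.norm_real, Real.norm_of_nonneg (Real.sqrt_nonneg _), mul_pow,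
    Real.sq_sqrt hx, mul_comm]

/-- The junk value `0` of `mprime` where `h (N * x) = 0` agrees with that of division by `0`. -/
theorem norm_mprime_sq (N : ℕ) {x : ℝ} (hNx : 0 ≤ h (N * x)) :
    ‖mprime N m₀ h x‖ ^ 2 = ‖vfun m₀ h x‖ ^ 2 / h (N * x) := by
  by_cases h0 : h (N * x) = 0
  · simp [mprime, h0]
  · rw [mprime, if_neg h0, norm_div, Complex.norm_real,
      Real.norm_of_nonneg (Real.sqrt_nonneg _), div_pow, Real.sq_sqrt hNx]

theorem ruelleR_eq_sum_norm_vfun_sq (N : ℕ) (hpos : ∀ x, 0 ≤ h x) (x : ℝ) :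
    ruelleR N m₀ h x = (N : ℝ)⁻¹ * ∑ k ∈ Finset.range N, ‖vfun m₀ h ((x + k) / N)‖ ^ 2 := by
  simp only [ruelleR, norm_vfun_sq (hpos _)]

/-- The term `k = 0` of `R h (N x)` is `|v x|²`, and all terms are nonnegative. -/
theorem vfun_eq_zero_of_ruelleR_mul_eq_zero {N : ℕ} (hN : 0 < N) (hpos : ∀ x, 0 ≤ h x)
    {x : ℝ} (hx : ruelleR N m₀ h (N * x) = 0) : vfun m₀ h x = 0 := by
  have hN0 : (N : ℝ) ≠ 0 := by positivity
  rw [ruelleR_eq_sum_norm_vfun_sq N hpos, mul_eq_zero, inv_eq_zero,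
    Finset.sum_eq_zero_iff_of_nonneg (fun _ _ => by positivity)] at hx
  have h0 := (hx.resolve_left hN0) 0 (Finset.mem_range.2 hN)
  rwa [Nat.cast_zero, add_zero, mul_div_cancel_left₀ _ hN0, sq_eq_zero_iff, norm_eq_zero] at h0

theorem sum_norm_mprime_sq_eq_ruelleR_div {N : ℕ} (hpos : ∀ x, 0 ≤ h x)
    (hper : Function.Periodic h 1) (x : ℝ) :
    (N : ℝ)⁻¹ * ∑ k ∈ Finset.range N, ‖mprime N m₀ h ((x + k) / N)‖ ^ 2
      = ruelleR N m₀ h x / h x := by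
  rcases Nat.eq_zero_or_pos N with rfl | hN
  · simp [ruelleR]
  have hN0 : (N : ℝ) ≠ 0 := by positivity
  have hshift (k : ℕ) : h (N * ((x + k) / N)) = h x := by
    rw [mul_div_cancel₀ _ hN0]
    simpa using hper.nat_mul k x
  simp only [norm_mprime_sq N (hpos _), hshift]
  rw [ruelleR_eq_sum_norm_vfun_sq N hpos, ← Finset.sum_div, mul_div_assoc]

end TransferOperator

theorem stmt7_general (N : ℕ) (hN : 2 ≤ N) (m₀ : ℝ → ℂ)
    (h : ℝ → ℝ) (hhper : Function.Periodic h 1)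
    (hpos : ∀ x, 0 ≤ h x)
    (hfix : ruelleR N m₀ h =ᵐ[volume] h) :
    (∀ᵐ x ∂volume, h (N * x) = 0 → vfun m₀ h x = 0) ∧
      (∀ᵐ x ∂volume, 0 < h x →
        (N : ℝ)⁻¹ * ∑ k ∈ Finset.range N,
            ‖mprime N m₀ h ((x + k) / N)‖ ^ 2 = 1) := by
  constructor
  · filter_upwards [Real.ae_comp_const_mul (by positivity : (N : ℝ) ≠ 0) hfix] with x hx hx0
    exact vfun_eq_zero_of_ruelleR_mul_eq_zero (by omega) hpos (hx.trans hx0)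
  · filter_upwards [hfix] with x hx hxpos
    rw [sum_norm_mprime_sq_eq_ruelleR_div hpos hhper, hx, div_self hxpos.ne']

/-- if `R_{m₀}(h) = h` then `v := h^{1/2}m₀` vanishes a.e. where
`h(z^N) = 0`, and `m₀' := v/h(z^N)^{1/2}` satisfies the quadrature condition
a.e. on the set where `h > 0`. -/
theorem stmt7 (N : ℕ) (hN : 2 ≤ N) (m₀ : ℝ → ℂ) (hm : Measurable m₀)
    (hmb : ∃ C, ∀ᵐ x ∂volume, ‖m₀ x‖ ≤ C)
    (h : ℝ → ℝ) (hhm : Measurable h) (hhper : Function.Periodic h 1)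
    (hpos : ∀ x, 0 ≤ h x) (hhi : IntegrableOn h (Set.Ioc (0:ℝ) 1))
    (hne : ¬ (h =ᵐ[volume] 0))
    (hfix : ruelleR N m₀ h =ᵐ[volume] h) :
    (∀ᵐ x ∂volume, h (N * x) = 0 → vfun m₀ h x = 0) ∧
      (∀ᵐ x ∂volume, 0 < h x →
        (N : ℝ)⁻¹ * ∑ k ∈ Finset.range N,
            ‖mprime N m₀ h ((x + k) / N)‖ ^ 2 = 1) :=
  stmt7_general N hN m₀ h hhper hpos hfix
end

section
/- Let N ≥ 2 and let m₀ ∈ L^∞(𝕋) be non-singular (i.e., its zero set has Haar measure zero). Suppose h ∈ L¹(𝕋), h ≥ 0, h ≠ 0 in L¹, and R_{m₀}(h) = h. Then h is non-singular, i.e., μ({z : h(z) = 0}) = 0. -/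
open MeasureTheory Filter Set
open scoped Real ENNReal

/-!
The zero set `Z` of `h` is backward invariant under the expanding map `x ↦ N x` of the circle:
`(R h)(N x)` is a sum of nonnegative terms, the `k = 0` term being `|m₀ x|² h x / N`, so
`h (N x) = 0` forces `h x = 0` wherever `m₀ x ≠ 0`, that is almost everywhere. Ergodicity of
`x ↦ N x` then makes `Z` null or conull, and `Z` conull would mean `h = 0` almost everywhere.
-/

namespace AddCircle

variable {T : ℝ} [Fact (0 < T)]

theorem quasiMeasurePreserving_mk :
    Measure.QuasiMeasurePreserving ((↑) : ℝ → AddCircle T) volume volume := by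
  refine ⟨AddCircle.measurable_mk', Measure.AbsolutelyContinuous.mk fun S hS hS0 => ?_⟩
  rw [Measure.map_apply AddCircle.measurable_mk' hS]
  have hcover : ((↑) : ℝ → AddCircle T) ⁻¹' S ⊆
      ⋃ n : ℤ, ((↑) : ℝ → AddCircle T) ⁻¹' S ∩ Ioc (n • T) (n • T + T) := by
    intro x hx
    obtain ⟨n, hn⟩ := mem_iUnion.mp
      ((iUnion_Ioc_add_zsmul (Fact.out : 0 < T) 0).symm ▸ mem_univ x)
    exact mem_iUnion.mpr ⟨n, hx, by simpa [add_one_mul] using hn⟩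
  refine measure_mono_null hcover (measure_iUnion_null fun n => ?_)
  rw [← Measure.restrict_apply' measurableSet_Ioc,
    (AddCircle.measurePreserving_mk T (n • T)).measure_preimage hS.nullMeasurableSet, hS0]

theorem ae_iff_ae_coe {p : AddCircle T → Prop} (hp : MeasurableSet {y | p y}) :
    (∀ᵐ y, p y) ↔ ∀ᵐ x : ℝ, p x := by
  refine ⟨quasiMeasurePreserving_mk.ae, fun h => ?_⟩
  rw [← (AddCircle.measurePreserving_mk T 0).map_eq]
  exact (ae_map_iff AddCircle.measurable_mk'.aemeasurable hp).mpr (ae_restrict_of_ae h)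

end AddCircle

theorem Function.Periodic.ae_eq_or_ae_ne_of_backward_invariant {β : Type*} [MeasurableSpace β]
    [MeasurableSingletonClass β] {T : ℝ} [Fact (0 < T)] {N : ℕ} (hN : 1 < N) {h : ℝ → β}
    (hhm : Measurable h) (hper : Function.Periodic h T) (c : β)
    (hinv : ∀ᵐ x, h (N * x) = c → h x = c) :
    (h =ᵐ[volume] fun _ => c) ∨ ∀ᵐ x, h x ≠ c := by
  set E : Set (AddCircle T) := hper.lift ⁻¹' {c}
  have hEm : MeasurableSet E :=
    (QuotientAddGroup.measurable_from_quotient (f := hper.lift)).mpr hhm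
      (measurableSet_singleton c)
  have hmem_E (x : ℝ) : (x : AddCircle T) ∈ E ↔ h x = c := by simp [E]
  have herg := AddCircle.ergodic_nsmul (T := T) hN
  have hE_inv : (fun y : AddCircle T => N • y) ⁻¹' E ≤ᵐ[volume] E := by
    refine (AddCircle.ae_iff_ae_coe ((herg.measurable hEm).imp hEm)).mpr ?_
    filter_upwards [hinv] with x hx (hNx : N • (x : AddCircle T) ∈ E)
    rw [← AddCircle.coe_nsmul, hmem_E, nsmul_eq_mul] at hNx
    exact (hmem_E x).mpr (hx hNx)
  rcases herg.ae_empty_or_univ_of_preimage_ae_le hEm.nullMeasurableSet hE_inv with hE | hE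
  · right
    have : ∀ᵐ y : AddCircle T, y ∉ E := measure_eq_zero_iff_ae_notMem.mp (ae_eq_empty.mp hE)
    filter_upwards [(AddCircle.ae_iff_ae_coe hEm.compl).mp this] with x hx
    exact (hmem_E x).not.mp hx
  · left
    have : ∀ᵐ y : AddCircle T, y ∈ E := ae_iff.mpr (ae_eq_univ.mp hE)
    filter_upwards [(AddCircle.ae_iff_ae_coe hEm).mp this] with x hx
    exact (hmem_E x).mp hx

section Ruelle

variable {N : ℕ} {m₀ : ℝ → ℂ} {h : ℝ → ℝ}

theorem eq_zero_of_ruelleR_natCast_mul_eq_zero (hN : N ≠ 0) (hpos : ∀ x, 0 ≤ h x) {x : ℝ}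
    (hRx : ruelleR N m₀ h (N * x) = 0) (hmx : m₀ x ≠ 0) : h x = 0 := by
  have hN' : (N : ℝ) ≠ 0 := Nat.cast_ne_zero.mpr hN
  have hsum := (mul_eq_zero.mp hRx).resolve_left (inv_ne_zero hN')
  have hterm := (Finset.sum_eq_zero_iff_of_nonneg fun k _ => mul_nonneg (by positivity) (hpos _)).mp
    hsum 0 (Finset.mem_range.mpr (Nat.pos_of_ne_zero hN))
  simp only [Nat.cast_zero, add_zero, mul_div_cancel_left₀ x hN'] at hterm
  exact (mul_eq_zero.mp hterm).resolve_left (by simpa using hmx)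

theorem ae_apply_eq_zero_of_apply_natCast_mul_eq_zero (hN : N ≠ 0) (hmns : ∀ᵐ x, m₀ x ≠ 0)
    (hpos : ∀ x, 0 ≤ h x) (hfix : ruelleR N m₀ h =ᵐ[volume] h) :
    ∀ᵐ x, h (N * x) = 0 → h x = 0 := by
  have hfix_mul : ∀ᵐ x : ℝ, ruelleR N m₀ h (N * x) = h (N * x) :=
    (Measure.quasiMeasurePreserving_smul volume (Nat.cast_ne_zero.mpr hN : (N : ℝ) ≠ 0)).ae hfix
  filter_upwards [hfix_mul, hmns] with x hRx hmx hx
  exact eq_zero_of_ruelleR_natCast_mul_eq_zero hN hpos (hRx.trans hx) hmx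

end Ruelle

theorem stmt8_general (N : ℕ) (hN : 2 ≤ N) (m₀ : ℝ → ℂ)
    (hmns : ∀ᵐ x ∂volume, m₀ x ≠ 0)
    (h : ℝ → ℝ) (hhm : Measurable h) (hhper : Function.Periodic h 1)
    (hpos : ∀ x, 0 ≤ h x)
    (hne : ¬ (h =ᵐ[volume] 0))
    (hfix : ruelleR N m₀ h =ᵐ[volume] h) :
    ∀ᵐ x ∂volume, h x ≠ 0 := by
  have : Fact ((0 : ℝ) < 1) := ⟨one_pos⟩
  have hinv := ae_apply_eq_zero_of_apply_natCast_mul_eq_zero (by omega) hmns hpos hfix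
  exact (hhper.ae_eq_or_ae_ne_of_backward_invariant (by omega) hhm 0 hinv).resolve_left hne

/-- if `m₀` is non-singular and `h ≥ 0`, `h ≠ 0`, `R(h) = h`,
then `h` is non-singular (its zero set is null). -/
theorem stmt8 (N : ℕ) (hN : 2 ≤ N) (m₀ : ℝ → ℂ) (hm : Measurable m₀)
    (hmper : Function.Periodic m₀ 1) (hmb : ∃ C, ∀ᵐ x ∂volume, ‖m₀ x‖ ≤ C)
    (hmns : ∀ᵐ x ∂volume, m₀ x ≠ 0)
    (h : ℝ → ℝ) (hhm : Measurable h) (hhper : Function.Periodic h 1)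
    (hpos : ∀ x, 0 ≤ h x) (hhi : IntegrableOn h (Set.Ioc (0:ℝ) 1))
    (hne : ¬ (h =ᵐ[volume] 0))
    (hfix : ruelleR N m₀ h =ᵐ[volume] h) :
    ∀ᵐ x ∂volume, h x ≠ 0 :=
  stmt8_general N hN m₀ hmns h hhm hhper hpos hne hfix
end

section
/- For N = 2, let m₀ ∈ L^∞(𝕋) satisfy |m₀(z)|² + |m₀(-z)|² = 2 for a.e. z ∈ 𝕋, and set m₁(z) := z · conj(m₀(-z)). Define operators on L²(𝕋) by (S_j f)(z) = m_j(z) f(z²), j = 0,1. Then S₀ and S₁ satisfy the Cuntz O₂ relations: S_i* S_j = δ_{ij} I and S₀S₀* + S₁S₁* = I. -/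
open MeasureTheory Filter Set
open scoped Real ENNReal
/-- The high-pass filter `m₁(z) = z · conj(m₀(-z))` (additively, `-z` is
translation by `1/2` and `z` is `e^{2πix}`). -/
noncomputable def m1of (m₀ : ℝ → ℂ) : ℝ → ℂ :=
  fun x => Complex.exp (2 * (Real.pi : ℂ) * Complex.I * (x : ℂ))
    * (starRingEnd ℂ) (m₀ (x + 1/2))

/-- The adjoint `S*` of `(Sf)(z) = m(z)f(z²)`:
`(S*f)(z) = (1/2)∑_{w²=z} conj(m(w)) f(w)`. -/
noncomputable def adj2 (m f : ℝ → ℂ) : ℝ → ℂ :=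
  fun x => (2 : ℂ)⁻¹ *
    ∑ k ∈ Finset.range 2, (starRingEnd ℂ) (m ((x + k) / 2)) * f ((x + k) / 2)

open ComplexConjugate

section Doubling

variable {E : Type*} [NormedAddCommGroup E]

theorem ae_comp_div_two {p : ℝ → Prop} (h : ∀ᵐ x, p x) : ∀ᵐ x, p (x / 2) := by
  have := (Measure.quasiMeasurePreserving_smul volume (r := (2:ℝ)⁻¹) (by norm_num)).ae h
  simpa only [smul_eq_mul, inv_mul_eq_div] using this

theorem IntervalIntegrable.comp_two_mul {φ : ℝ → E} (hper : Function.Periodic φ 1)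
    (hφ : IntervalIntegrable φ volume 0 1) :
    IntervalIntegrable (fun x => φ (2 * x)) volume 0 1 := by
  simpa using (hper.intervalIntegrable₀ one_ne_zero hφ 0 2).comp_mul_left (c := 2)

variable {φ : ℝ → E}

theorem IntervalIntegrable.left_half (hφ : IntervalIntegrable φ volume 0 1) :
    IntervalIntegrable φ volume 0 (1 / 2) :=
  hφ.mono_set (uIcc_subset_uIcc_left (by norm_num [uIcc_of_le]))

theorem IntervalIntegrable.right_half (hφ : IntervalIntegrable φ volume 0 1) :
    IntervalIntegrable φ volume (1 / 2) 1 :=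
  hφ.mono_set (uIcc_subset_uIcc_right (by norm_num [uIcc_of_le]))

theorem IntervalIntegrable.comp_div_two (hφ : IntervalIntegrable φ volume 0 1) :
    IntervalIntegrable (fun x => φ (x / 2)) volume 0 1 := by
  simpa [div_eq_inv_mul] using hφ.left_half.comp_mul_left (c := 2⁻¹)

theorem IntervalIntegrable.comp_div_two_add_half (hφ : IntervalIntegrable φ volume 0 1) :
    IntervalIntegrable (fun x => φ (x / 2 + 1 / 2)) volume 0 1 := by
  have h := (hφ.right_half.comp_add_right (1 / 2)).comp_mul_left (c := 2⁻¹)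
  norm_num at h
  simpa [div_eq_inv_mul] using h

theorem intervalIntegral_comp_div_two_add_comp_div_two_add_half [NormedSpace ℝ E]
    (hφ : IntervalIntegrable φ volume 0 1) :
    ∫ x in (0:ℝ)..1, (φ (x / 2) + φ (x / 2 + 1 / 2)) = (2:ℝ) • ∫ x in (0:ℝ)..1, φ x := by
  have h₀ := intervalIntegral.integral_comp_div (a := 0) (b := 1) φ two_ne_zero
  have h₁ := intervalIntegral.integral_comp_div_add (a := 0) (b := 1) φ two_ne_zero (1 / 2)
  rw [intervalIntegral.integral_add hφ.comp_div_two hφ.comp_div_two_add_half, h₀, h₁]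
  norm_num
  rw [← smul_add, intervalIntegral.integral_add_adjacent_intervals hφ.left_half hφ.right_half]

theorem intervalIntegrable_mul_comp_two_mul {a b : ℝ → ℂ} {C : ℝ}
    (ha : AEStronglyMeasurable a) (ha_bdd : ∀ᵐ x, ‖a x‖ ≤ C) (hb : Function.Periodic b 1)
    (hb_int : IntervalIntegrable b volume 0 1) :
    IntervalIntegrable (fun x => a x * b (2 * x)) volume 0 1 := by
  have h := hb_int.comp_two_mul hb
  rw [intervalIntegrable_iff_integrableOn_Ioc_of_le zero_le_one] at h ⊢
  exact h.bdd_mul ha.restrict (ae_restrict_of_ae ha_bdd)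

theorem intervalIntegral_mul_comp_two_mul {a b : ℝ → ℂ} {c : ℂ} (hb : Function.Periodic b 1)
    (hab : IntervalIntegrable (fun x => a x * b (2 * x)) volume 0 1)
    (hc : ∀ᵐ x, a x + a (x + 1 / 2) = c) :
    ∫ x in (0:ℝ)..1, a x * b (2 * x) = c / 2 * ∫ x in (0:ℝ)..1, b x := by
  have hdouble := intervalIntegral_comp_div_two_add_comp_div_two_add_half hab
  have hpoint : ∀ᵐ x, a (x / 2) * b (2 * (x / 2)) + a (x / 2 + 1 / 2) * b (2 * (x / 2 + 1 / 2))
      = c * b x := by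
    filter_upwards [ae_comp_div_two hc] with x hx
    rw [show 2 * (x / 2 + 1 / 2) = x + 1 by ring, hb x, mul_div_cancel₀ x two_ne_zero, ← hx]
    ring
  rw [intervalIntegral.integral_congr_ae (hpoint.mono fun x hx _ => hx),
    intervalIntegral.integral_const_mul, Complex.real_smul, Complex.ofReal_ofNat] at hdouble
  linear_combination -hdouble / 2

end Doubling

theorem integrable_conj_mul_of_norm_sq {α : Type*} [MeasurableSpace α] {μ : Measure α}
    {f g : α → ℂ} (hf : AEStronglyMeasurable f μ) (hg : AEStronglyMeasurable g μ)
    (hf2 : Integrable (fun x => ‖f x‖ ^ 2) μ) (hg2 : Integrable (fun x => ‖g x‖ ^ 2) μ) :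
    Integrable (fun x => conj (f x) * g x) μ := by
  refine (hf2.add hg2).mono' (hf.star.mul hg) (Eventually.of_forall fun x => ?_)
  rw [norm_mul, Complex.norm_conj, Pi.add_apply]
  nlinarith [sq_nonneg (‖f x‖ - ‖g x‖)]

/-- `conj(m(w)) m'(w) + conj(m(-w)) m'(-w)`, with `-w` read additively as `x + 1/2`. For a QMF
pair the values at `m, m' ∈ {m₀, m₁}` form `2 I`. -/
noncomputable def polyphaseInner (m m' : ℝ → ℂ) (x : ℝ) : ℂ :=
  conj (m x) * m' x + conj (m (x + 1 / 2)) * m' (x + 1 / 2)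

theorem polyphaseInner_self (m : ℝ → ℂ) (x : ℝ) :
    polyphaseInner m m x = ((‖m x‖ ^ 2 + ‖m (x + 1 / 2)‖ ^ 2 : ℝ) : ℂ) := by
  rw [polyphaseInner, mul_comm, Complex.mul_conj, mul_comm, Complex.mul_conj]
  push_cast [Complex.normSq_eq_norm_sq]
  ring

theorem norm_le_two_of_norm_sq_add_norm_sq_eq_two {z w : ℂ} (h : ‖z‖ ^ 2 + ‖w‖ ^ 2 = 2) :
    ‖z‖ ≤ 2 := by
  nlinarith [norm_nonneg z, sq_nonneg ‖w‖]

theorem setIntegral_conj_mul_mul_comp_two_mul {m m' f g : ℝ → ℂ} {C : ℝ} {c : ℂ}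
    (hm : Measurable m) (hm' : Measurable m') (hmC : ∀ᵐ x, ‖m x‖ ≤ C)
    (hm'C : ∀ᵐ x, ‖m' x‖ ≤ C) (hc : ∀ᵐ x, polyphaseInner m m' x = c)
    (hf : Measurable f) (hfper : Function.Periodic f 1)
    (hf2 : IntegrableOn (fun x => ‖f x‖ ^ 2) (Ioc 0 1))
    (hg : Measurable g) (hgper : Function.Periodic g 1)
    (hg2 : IntegrableOn (fun x => ‖g x‖ ^ 2) (Ioc 0 1)) :
    ∫ x in Ioc 0 1, conj (m x * f (2 * x)) * (m' x * g (2 * x))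
      = c / 2 * ∫ x in Ioc 0 1, conj (f x) * g x := by
  set a : ℝ → ℂ := fun x => conj (m x) * m' x
  set b : ℝ → ℂ := fun x => conj (f x) * g x
  have hb : Function.Periodic b 1 := fun x => by simp only [b, hfper x, hgper x]
  have hb_int : IntervalIntegrable b volume 0 1 :=
    (intervalIntegrable_iff_integrableOn_Ioc_of_le zero_le_one).2
      (integrable_conj_mul_of_norm_sq hf.aestronglyMeasurable hg.aestronglyMeasurable hf2 hg2)
  have ha_bdd : ∀ᵐ x, ‖a x‖ ≤ C * C := by
    filter_upwards [hmC, hm'C] with x hx hx'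
    rw [norm_mul, Complex.norm_conj]
    exact mul_le_mul hx hx' (norm_nonneg _) ((norm_nonneg _).trans hx)
  have hab := intervalIntegrable_mul_comp_two_mul (by fun_prop) ha_bdd hb hb_int
  have hsplit : (fun x => conj (m x * f (2 * x)) * (m' x * g (2 * x))) =
      fun x => a x * b (2 * x) := funext fun x => by simp only [a, b, map_mul]; ring
  rw [← intervalIntegral.integral_of_le zero_le_one, ← intervalIntegral.integral_of_le zero_le_one,
    hsplit]
  exact intervalIntegral_mul_comp_two_mul hb hab hc

theorem norm_exp_two_pi_I_mul (t : ℝ) : ‖Complex.exp (2 * π * Complex.I * t)‖ = 1 := by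
  rw [show 2 * π * Complex.I * t = ((2 * π * t : ℝ) : ℂ) * Complex.I by push_cast; ring]
  exact Complex.norm_exp_ofReal_mul_I _

theorem exp_two_pi_I_mul_add_half (t : ℝ) :
    Complex.exp (2 * π * Complex.I * ((t + 1 / 2 : ℝ) : ℂ))
      = -Complex.exp (2 * π * Complex.I * t) := by
  rw [show 2 * π * Complex.I * ((t + 1 / 2 : ℝ) : ℂ) = 2 * π * Complex.I * t + π * Complex.I by
    push_cast; ring, Complex.exp_add, Complex.exp_pi_mul_I, mul_neg_one]

section HighPass

variable {m₀ : ℝ → ℂ}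

theorem measurable_m1of (hm : Measurable m₀) : Measurable (m1of m₀) := by
  unfold m1of; fun_prop

theorem norm_m1of (x : ℝ) : ‖m1of m₀ x‖ = ‖m₀ (x + 1 / 2)‖ := by
  rw [m1of, norm_mul, norm_exp_two_pi_I_mul, one_mul, Complex.norm_conj]

theorem m1of_add_half (hper : Function.Periodic m₀ 1) (x : ℝ) :
    m1of m₀ (x + 1 / 2) = -(Complex.exp (2 * π * Complex.I * x) * conj (m₀ x)) := by
  rw [m1of, exp_two_pi_I_mul_add_half, add_assoc, add_halves, hper, neg_mul]

theorem polyphaseInner_m1of_self (hper : Function.Periodic m₀ 1) (x : ℝ) :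
    polyphaseInner (m1of m₀) (m1of m₀) x = polyphaseInner m₀ m₀ x := by
  rw [polyphaseInner_self, polyphaseInner_self, norm_m1of, m1of_add_half hper, norm_neg,
    norm_mul, norm_exp_two_pi_I_mul, one_mul, Complex.norm_conj, add_comm]

theorem polyphaseInner_m1of (hper : Function.Periodic m₀ 1) (x : ℝ) :
    polyphaseInner m₀ (m1of m₀) x = 0 := by
  rw [polyphaseInner, m1of_add_half hper, m1of]
  ring

end HighPass

theorem adj2_apply (m f : ℝ → ℂ) (x : ℝ) :
    adj2 m f x
      = 2⁻¹ * (conj (m (x / 2)) * f (x / 2) + conj (m (x / 2 + 1 / 2)) * f (x / 2 + 1 / 2)) := by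
  simp [adj2, Finset.sum_range_succ, add_div]

theorem measurable_adj2 {m f : ℝ → ℂ} (hm : Measurable m) (hf : Measurable f) :
    Measurable (adj2 m f) := by
  unfold adj2; fun_prop

/-- Lagrange's identity in `ℂ²`. -/
theorem norm_sq_conj_mul_add_add_norm_sq_mul_sub (P Q u v : ℂ) :
    ‖conj P * u + conj Q * v‖ ^ 2 + ‖Q * u - P * v‖ ^ 2
      = (‖P‖ ^ 2 + ‖Q‖ ^ 2) * (‖u‖ ^ 2 + ‖v‖ ^ 2) := by
  simp only [Complex.sq_norm, Complex.normSq_apply, Complex.mul_re, Complex.mul_im,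
    Complex.add_re, Complex.add_im, Complex.sub_re, Complex.sub_im, Complex.conj_re,
    Complex.conj_im]
  ring

theorem norm_sq_adj2_add_norm_sq_adj2_m1of {m₀ : ℝ → ℂ} (hper : Function.Periodic m₀ 1)
    (f : ℝ → ℂ) {x : ℝ} (hx : ‖m₀ (x / 2)‖ ^ 2 + ‖m₀ (x / 2 + 1 / 2)‖ ^ 2 = 2) :
    ‖adj2 m₀ f x‖ ^ 2 + ‖adj2 (m1of m₀) f x‖ ^ 2
      = 2⁻¹ * (‖f (x / 2)‖ ^ 2 + ‖f (x / 2 + 1 / 2)‖ ^ 2) := by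
  set e := Complex.exp (2 * π * Complex.I * ((x / 2 : ℝ) : ℂ))
  have hadj1 : adj2 (m1of m₀) f x = conj e * (2⁻¹ *
      (m₀ (x / 2 + 1 / 2) * f (x / 2) - m₀ (x / 2) * f (x / 2 + 1 / 2))) := by
    rw [adj2_apply, m1of_add_half hper, m1of]
    simp only [map_mul, map_neg, Complex.conj_conj]
    ring
  have hlagrange := norm_sq_conj_mul_add_add_norm_sq_mul_sub (m₀ (x / 2)) (m₀ (x / 2 + 1 / 2))
    (f (x / 2)) (f (x / 2 + 1 / 2))
  rw [hx] at hlagrange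
  rw [hadj1, adj2_apply, norm_mul, norm_mul, norm_mul, Complex.norm_conj, norm_exp_two_pi_I_mul,
    norm_inv, Complex.norm_two]
  linear_combination hlagrange / 4

theorem setIntegral_norm_sq_adj2_add_norm_sq_adj2_m1of {m₀ f : ℝ → ℂ} (hm : Measurable m₀)
    (hper : Function.Periodic m₀ 1) (hqmf : ∀ᵐ x, ‖m₀ x‖ ^ 2 + ‖m₀ (x + 1 / 2)‖ ^ 2 = 2)
    (hf : Measurable f) (hf2 : IntegrableOn (fun x => ‖f x‖ ^ 2) (Ioc 0 1)) :
    (∫ x in Ioc 0 1, ‖adj2 m₀ f x‖ ^ 2) + ∫ x in Ioc 0 1, ‖adj2 (m1of m₀) f x‖ ^ 2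
      = ∫ x in Ioc 0 1, ‖f x‖ ^ 2 := by
  have hφ : IntervalIntegrable (fun x => ‖f x‖ ^ 2) volume 0 1 :=
    (intervalIntegrable_iff_integrableOn_Ioc_of_le zero_le_one).2 hf2
  have hsum : ∀ᵐ x, ‖adj2 m₀ f x‖ ^ 2 + ‖adj2 (m1of m₀) f x‖ ^ 2
      = 2⁻¹ * (‖f (x / 2)‖ ^ 2 + ‖f (x / 2 + 1 / 2)‖ ^ 2) := by
    filter_upwards [ae_comp_div_two hqmf] with x hx
    exact norm_sq_adj2_add_norm_sq_adj2_m1of hper f hx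
  have hbound : IntervalIntegrable (fun x => 2⁻¹ * (‖f (x / 2)‖ ^ 2 + ‖f (x / 2 + 1 / 2)‖ ^ 2))
      volume 0 1 := (hφ.comp_div_two.add hφ.comp_div_two_add_half).const_mul _
  have hint : ∀ m, Measurable m → (∀ᵐ x, ‖adj2 m f x‖ ^ 2 ≤
      2⁻¹ * (‖f (x / 2)‖ ^ 2 + ‖f (x / 2 + 1 / 2)‖ ^ 2)) →
      IntervalIntegrable (fun x => ‖adj2 m f x‖ ^ 2) volume 0 1 := by
    intro m hm hle
    rw [intervalIntegrable_iff_integrableOn_Ioc_of_le zero_le_one] at hbound ⊢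
    refine hbound.mono' ((measurable_adj2 hm hf).norm.pow_const 2).aestronglyMeasurable ?_
    filter_upwards [ae_restrict_of_ae hle] with x hx
    rwa [Real.norm_of_nonneg (by positivity)]
  have hint₀ := hint m₀ hm (hsum.mono fun x hx => hx ▸ le_add_of_nonneg_right (by positivity))
  have hint₁ := hint (m1of m₀) (measurable_m1of hm)
    (hsum.mono fun x hx => hx ▸ le_add_of_nonneg_left (by positivity))
  simp only [← intervalIntegral.integral_of_le zero_le_one]
  rw [← intervalIntegral.integral_add hint₀ hint₁, intervalIntegral.integral_congr_ae
    (hsum.mono fun x hx _ => hx), intervalIntegral.integral_const_mul,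
    intervalIntegral_comp_div_two_add_comp_div_two_add_half hφ, smul_eq_mul, inv_mul_cancel_left₀
    two_ne_zero]

/-- for a quadrature mirror filter `m₀` (order `2`), the
operators `(S_jf)(z) = m_j(z)f(z²)`, with `m₁(z) = z·conj(m₀(-z))`, satisfy
the Cuntz `O₂` relations `S_i*S_j = δ_{ij}I` and `S₀S₀* + S₁S₁* = I`. -/
theorem stmt9 (m₀ : ℝ → ℂ) (hm : Measurable m₀) (hmper : Function.Periodic m₀ 1)
    (hqmf : ∀ᵐ x ∂volume, ‖m₀ x‖ ^ 2 + ‖m₀ (x + 1/2)‖ ^ 2 = 2) :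
    ∀ f g : ℝ → ℂ, Measurable f → Function.Periodic f 1 →
      IntegrableOn (fun x => ‖f x‖ ^ 2) (Set.Ioc (0:ℝ) 1) →
      Measurable g → Function.Periodic g 1 →
      IntegrableOn (fun x => ‖g x‖ ^ 2) (Set.Ioc (0:ℝ) 1) →
      ((∫ x in Set.Ioc (0:ℝ) 1,
            (starRingEnd ℂ) (m₀ x * f (2 * x)) * (m₀ x * g (2 * x)))
          = ∫ x in Set.Ioc (0:ℝ) 1, (starRingEnd ℂ) (f x) * g x) ∧
      ((∫ x in Set.Ioc (0:ℝ) 1,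
            (starRingEnd ℂ) (m1of m₀ x * f (2 * x)) * (m1of m₀ x * g (2 * x)))
          = ∫ x in Set.Ioc (0:ℝ) 1, (starRingEnd ℂ) (f x) * g x) ∧
      ((∫ x in Set.Ioc (0:ℝ) 1,
            (starRingEnd ℂ) (m₀ x * f (2 * x)) * (m1of m₀ x * g (2 * x)))
          = 0) ∧
      ((∫ x in Set.Ioc (0:ℝ) 1, ‖adj2 m₀ f x‖ ^ 2)
          + (∫ x in Set.Ioc (0:ℝ) 1, ‖adj2 (m1of m₀) f x‖ ^ 2)
        = ∫ x in Set.Ioc (0:ℝ) 1, ‖f x‖ ^ 2) := by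
  intro f g hf hfper hf2 hg hgper hg2
  have hm₁ := measurable_m1of hm
  have hbdd₀ : ∀ᵐ x, ‖m₀ x‖ ≤ 2 := hqmf.mono fun x => norm_le_two_of_norm_sq_add_norm_sq_eq_two
  have hbdd₁ : ∀ᵐ x, ‖m1of m₀ x‖ ≤ 2 := by
    filter_upwards [(measurePreserving_add_right volume (1 / 2)).quasiMeasurePreserving.ae hbdd₀]
      with x hx
    rwa [norm_m1of]
  have hunit₀ : ∀ᵐ x, polyphaseInner m₀ m₀ x = 2 := hqmf.mono fun x hx => by
    rw [polyphaseInner_self, hx, Complex.ofReal_ofNat]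
  have hunit₁ : ∀ᵐ x, polyphaseInner (m1of m₀) (m1of m₀) x = 2 := hunit₀.mono fun x hx => by
    rwa [polyphaseInner_m1of_self hmper]
  refine ⟨?_, ?_, ?_, setIntegral_norm_sq_adj2_add_norm_sq_adj2_m1of hm hmper hqmf hf hf2⟩
  · rw [setIntegral_conj_mul_mul_comp_two_mul hm hm hbdd₀ hbdd₀ hunit₀ hf hfper hf2 hg hgper hg2,
      div_self two_ne_zero, one_mul]
  · rw [setIntegral_conj_mul_mul_comp_two_mul hm₁ hm₁ hbdd₁ hbdd₁ hunit₁ hf hfper hf2 hg hgper hg2,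
      div_self two_ne_zero, one_mul]
  · rw [setIntegral_conj_mul_mul_comp_two_mul hm hm₁ hbdd₀ hbdd₁
      (Eventually.of_forall (polyphaseInner_m1of hmper)) hf hfper hf2 hg hgper hg2,
      zero_div, zero_mul]
end

section
/- Let N, p ≥ 2 with gcd(N,p) = 1, let m₀ ∈ L^∞(𝕋) and m_p(z) := m₀(z^p), with Ruelle operators R₀ and R_p respectively (both of order N). Let ρ_p = e^{2πi/p} and define f_j(z) := f(ρ_p^j z) for f ∈ L¹(𝕋) and j ∈ ℤ/pℤ. If R_p(f) = f, then R_p(f_j) = f_{Nj mod p} for each j ∈ ℤ/pℤ. -/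
open MeasureTheory Filter Set
open scoped Real ENNReal

/-- with `m_p(z) = m₀(z^p)`, `gcd(N,p) = 1`, and
`f_j(z) = f(ρ_p^j z)` (`ρ_p = e^{2πi/p}`, additively translation by `j/p`),
if `R_p(f) = f` then `R_p(f_j) = f_{Nj mod p}`. -/
theorem stmt16 (N p : ℕ) (hN : 2 ≤ N) (hp : 2 ≤ p) (hcop : Nat.Coprime N p)
    (m₀ : ℝ → ℂ) (hm : Measurable m₀) (hmper : Function.Periodic m₀ 1)
    (hmb : ∃ C, ∀ᵐ x ∂volume, ‖m₀ x‖ ≤ C)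
    (f : ℝ → ℂ) (hfm : Measurable f) (hfper : Function.Periodic f 1)
    (hfi : IntegrableOn f (Set.Ioc (0:ℝ) 1))
    (hfix : ruelle N (fun x => m₀ (p * x)) f =ᵐ[volume] f) (j : ℕ) :
    ruelle N (fun x => m₀ (p * x)) (fun x => f (x + j / p))
      =ᵐ[volume] fun x => f (x + ((N * j) % p : ℕ) / p) := by
  have hN0 : (N : ℝ) ≠ 0 := Nat.cast_ne_zero.mpr (by omega)
  have hp0 : (p : ℝ) ≠ 0 := Nat.cast_ne_zero.mpr (by omega)
  set c : ℝ := ((N * j : ℕ) : ℝ) / p with hc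
  -- Step 1: pointwise identity R_p(f_j)(x) = R_p(f)(x + c)
  have key : ∀ x : ℝ, ruelle N (fun x => m₀ (p * x)) (fun x => f (x + j / p)) x
      = ruelle N (fun x => m₀ (p * x)) f (x + c) := by
    intro x
    unfold ruelle
    congr 1
    apply Finset.sum_congr rfl
    intro k _
    have e1 : (x + c + k) / N = (x + k) / N + (j : ℝ) / p := by
      rw [hc]; push_cast; field_simp; ring
    rw [e1]
    have e2 : (p : ℝ) * ((x + k) / N + (j : ℝ) / p)
        = (p : ℝ) * ((x + k) / N) + (j : ℝ) * 1 := by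
      field_simp
    have e4 : m₀ ((p : ℝ) * ((x + k) / N + (j : ℝ) / p))
        = m₀ ((p : ℝ) * ((x + k) / N)) := by
      rw [e2]; exact (hmper.nat_mul j) _
    simp only [e4]
  -- Step 2: f(x + c) = f(x + (Nj mod p)/p) pointwise
  have keyf : ∀ x : ℝ, f (x + c) = f (x + ((N * j) % p : ℕ) / p) := by
    intro x
    have e3 : x + c = x + ((N * j) % p : ℕ) / p + ((N * j) / p : ℕ) * 1 := by
      rw [hc]
      have := Nat.div_add_mod (N * j) p
      have hcast : ((N * j : ℕ) : ℝ) = p * ((N * j) / p : ℕ) + ((N * j) % p : ℕ) := by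
        exact_mod_cast (this.symm : (N * j : ℕ) = p * ((N * j) / p) + (N * j) % p)
      rw [hcast]; field_simp; ring
    rw [e3, (hfper.nat_mul ((N * j) / p)) _]
  -- Step 3: translate the a.e. fixed-point identity
  have h2 : (fun x => ruelle N (fun x => m₀ (p * x)) f (x + c))
      =ᵐ[volume] fun x => f (x + c) := by
    have hqmp := (measurePreserving_add_right (volume : Measure ℝ) c).quasiMeasurePreserving
    exact hqmp.ae_eq_comp hfix
  filter_upwards [h2] with x hx
  rw [key x, ← keyf x]
  exact hx
end

section
/- Let N, p ≥ 2 with gcd(N,p) = 1, m₀ ∈ L^∞(𝕋), m_p(z) := m₀(z^p), and let R₀, R_p be the respective order-N Ruelle operators. Let V₀ = {f ∈ L¹(𝕋) : R₀f = f} and V_p = {f ∈ L¹(𝕋) : R_p f = f}, and let τ_p f(z) = f(e^{2πi/p} z). Then {f ∈ V_p : τ_p f = f} = {f : ∃ h ∈ V₀, f(z) = h(z^p) a.e.}. -/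
/-!
Writing `f = h ∘ (p * ·)`, the substitution intertwines the two Ruelle operators:
`R_p (h ∘ (p * ·)) = (R₀ h) ∘ (p * ·)`, because multiplication by `p` permutes the residues
modulo `N` when `gcd(N, p) = 1`, so it only reorders the `N` branches `(x + k) / N`. Invariance
under translation by `1 / p` is exactly what is needed for `f` to factor through `x ↦ p x`, with
`h y = f (fract y / p)`.
-/

open MeasureTheory Filter Set
open scoped Real ENNReal

section AeEqComp

variable {G β : Type*} [AddCommGroup G] [MeasurableSpace G] [MeasurableAdd G]
  {μ : Measure G} [μ.IsAddRightInvariant]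

theorem ae_eq_comp_add_right {u v : G → β} (b : G) (h : u =ᵐ[μ] v) :
    (fun x => u (x + b)) =ᵐ[μ] fun x => v (x + b) :=
  (measurePreserving_add_right μ b).quasiMeasurePreserving.ae_eq_comp h

theorem comp_add_zsmul_ae_eq_self {f : G → β} {c : G} (h : (fun x => f (x + c)) =ᵐ[μ] f)
    (m : ℤ) :
    (fun x => f (x + m • c)) =ᵐ[μ] f := by
  have hneg : (fun x => f (x + -c)) =ᵐ[μ] f := by
    simpa only [neg_add_cancel_right] using (ae_eq_comp_add_right (-c) h).symm
  induction m using Int.induction_on with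
  | zero => simp
  | succ n ih =>
    have e : (fun x => f (x + ((n : ℤ) + 1) • c)) = fun x => f (x + c + (n : ℤ) • c) := by
      funext x; congr 1; rw [add_zsmul, one_zsmul]; abel
    exact e ▸ (ae_eq_comp_add_right c ih).trans h
  | pred n ih =>
    have e : (fun x => f (x + (-(n : ℤ) - 1) • c)) =
        fun x => f (x + -c + (-(n : ℤ)) • c) := by
      funext x; congr 1; rw [sub_zsmul, one_zsmul]; abel
    exact e ▸ (ae_eq_comp_add_right (-c) ih).trans hneg

end AeEqComp

section RealAeEqComp

variable {β : Type*}

theorem ae_eq_comp_mul_left_iff {u v : ℝ → β} {a : ℝ} (ha : a ≠ 0) :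
    ((fun x => u (a * x)) =ᵐ[volume] fun x => v (a * x)) ↔ u =ᵐ[volume] v := by
  have comp : ∀ {u v : ℝ → β} {a : ℝ}, a ≠ 0 → u =ᵐ[volume] v →
      (fun x => u (a * x)) =ᵐ[volume] fun x => v (a * x) :=
    fun ha h => (Measure.quasiMeasurePreserving_smul volume ha).ae_eq_comp h
  refine ⟨fun h => ?_, comp ha⟩
  simpa only [← mul_assoc, mul_inv_cancel₀ ha, one_mul] using comp (inv_ne_zero ha) h

theorem ae_eq_comp_add_div {u v : ℝ → β} (b : ℝ) {c : ℝ} (hc : c ≠ 0)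
    (h : u =ᵐ[volume] v) :
    (fun x => u ((x + b) / c)) =ᵐ[volume] fun x => v ((x + b) / c) := by
  simpa only [div_eq_inv_mul] using
    ae_eq_comp_add_right b ((ae_eq_comp_mul_left_iff (inv_ne_zero hc)).2 h)

theorem ae_eq_comp_fract_div_of_comp_add_ae_eq_self {f : ℝ → β} {p : ℝ} (hp : p ≠ 0)
    (hτ : (fun x => f (x + 1 / p)) =ᵐ[volume] f) :
    f =ᵐ[volume] fun x => f (Int.fract (p * x) / p) := by
  have hall : ∀ᵐ x ∂volume, ∀ m : ℤ, f (x + m • (1 / p)) = f x :=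
    ae_all_iff.2 (comp_add_zsmul_ae_eq_self hτ)
  filter_upwards [hall] with x hx
  have e : Int.fract (p * x) / p = x + (-⌊p * x⌋) • (1 / p) := by
    rw [Int.fract, zsmul_eq_mul]; push_cast; field_simp; ring
  rw [e, hx]

theorem comp_add_one_div_ae_eq_self_of_ae_eq_comp_mul {f h : ℝ → β} {p : ℝ}
    (hp : p ≠ 0) (hh : Function.Periodic h 1) (hf : f =ᵐ[volume] fun x => h (p * x)) :
    (fun x => f (x + 1 / p)) =ᵐ[volume] f :=
  calc (fun x => f (x + 1 / p)) =ᵐ[volume] fun x => h (p * (x + 1 / p)) :=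
        ae_eq_comp_add_right _ hf
    _ = fun x => h (p * x) := funext fun x => by rw [mul_add, mul_one_div_cancel hp, hh]
    _ =ᵐ[volume] f := hf.symm

end RealAeEqComp

theorem Finset.sum_range_mul_mod_of_coprime {M : Type*} [AddCommMonoid M] {N p : ℕ}
    (hcop : N.Coprime p) (g : ℕ → M) :
    ∑ k ∈ range N, g (p * k % N) = ∑ k ∈ range N, g k := by
  have maps : Set.MapsTo (fun k => p * k % N) (range N) (range N) := fun k hk =>
    mem_range.2 (Nat.mod_lt _ (by have := mem_range.1 hk; omega))
  have inj : Set.InjOn (fun k => p * k % N) (range N) := fun a ha b hb hab =>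
    Nat.ModEq.eq_of_lt_of_lt (Nat.ModEq.cancel_left_of_coprime hcop hab)
      (mem_range.1 ha) (mem_range.1 hb)
  exact sum_nbij _ maps inj (surjOn_of_injOn_of_card_le _ maps inj le_rfl) fun _ _ => rfl

theorem integrableOn_comp_fract_div {E : Type*} [NormedAddCommGroup E] {f : ℝ → E} {p : ℝ}
    (hp : 1 ≤ p) (hf : IntegrableOn f (Ioc 0 1)) :
    IntegrableOn (fun y => f (Int.fract y / p)) (Ioc 0 1) := by
  have hp0 : 0 < p := by linarith
  have hscaled : IntegrableOn (fun y => f (p⁻¹ * y)) (Ioc 0 p) := by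
    rw [← integrable_indicator_iff measurableSet_Ioc] at hf ⊢
    have hpre : (p⁻¹ * ·) ⁻¹' Ioc (0 : ℝ) 1 = Ioc 0 p := by
      rw [preimage_const_mul_Ioc₀ _ _ (inv_pos.2 hp0), zero_div, one_div, inv_inv]
    refine (hf.comp_mul_left' (inv_ne_zero hp0.ne')).congr (.of_forall fun y => ?_)
    rw [← hpre]
    exact (indicator_comp_right _).symm
  replace hscaled := hscaled.mono_set (Ioc_subset_Ioc_right hp)
  rw [integrableOn_Ioc_iff_integrableOn_Ioo] at hscaled ⊢
  refine hscaled.congr_fun (fun y hy => ?_) measurableSet_Ioo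
  rw [Int.fract_eq_self.2 ⟨hy.1.le, hy.2⟩, div_eq_inv_mul]

section Ruelle

variable {N : ℕ}

theorem ruelle_congr_ae (m : ℝ → ℂ) {u v : ℝ → ℂ} (h : u =ᵐ[volume] v) :
    ruelle N m u =ᵐ[volume] ruelle N m v := by
  have hk : ∀ᵐ x ∂volume, ∀ k ∈ Finset.range N, u ((x + k) / N) = v ((x + k) / N) :=
    (eventually_all_finset (Finset.range N)).2 fun k hk =>
      have hN : N ≠ 0 := by have := Finset.mem_range.1 hk; omega
      ae_eq_comp_add_div (k : ℝ) (Nat.cast_ne_zero.2 hN) h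
  filter_upwards [hk] with x hx
  simp only [ruelle]
  rw [Finset.sum_congr rfl fun k hk => by rw [hx k hk]]

theorem ruelle_fixed_congr_ae (m : ℝ → ℂ) {u v : ℝ → ℂ} (h : u =ᵐ[volume] v) :
    ruelle N m u =ᵐ[volume] u ↔ ruelle N m v =ᵐ[volume] v :=
  ⟨fun hu => ((ruelle_congr_ae m h).symm.trans hu).trans h,
    fun hv => ((ruelle_congr_ae m h).trans hv).trans h.symm⟩

theorem ruelle_comp_mul {p : ℕ} (hcop : N.Coprime p) {m₀ h : ℝ → ℂ}
    (hm : Function.Periodic m₀ 1) (hh : Function.Periodic h 1) :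
    ruelle N (fun y => m₀ (p * y)) (fun y => h (p * y)) = fun x => ruelle N m₀ h (p * x) := by
  funext x
  set G : ℝ → ℂ := fun y => (‖m₀ y‖ : ℂ) ^ 2 * h y
  have hG : Function.Periodic G 1 := fun y => by simp only [G, hm y, hh y]
  have branch : ∀ k < N, G (p * ((x + k) / N)) = G ((p * x + (p * k % N : ℕ)) / N) := by
    intro k hk
    have hN : (N : ℝ) ≠ 0 := Nat.cast_ne_zero.2 (by omega)
    have hdiv : ((p * k : ℕ) : ℝ) = N * (p * k / N : ℕ) + (p * k % N : ℕ) := by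
      exact_mod_cast (Nat.div_add_mod _ _).symm
    have harg :
        (p : ℝ) * ((x + k) / N) = (p * x + (p * k % N : ℕ)) / N + (p * k / N : ℕ) := by
      field_simp
      push_cast at hdiv ⊢
      linear_combination hdiv
    simpa only [harg, mul_one] using hG.nat_mul (p * k / N) ((p * x + (p * k % N : ℕ)) / N)
  simp only [ruelle]
  congr 1
  rw [Finset.sum_congr rfl fun k hk => branch k (Finset.mem_range.1 hk)]
  exact Finset.sum_range_mul_mod_of_coprime hcop fun k : ℕ => G ((p * x + k) / N)

theorem ruelle_fixed_comp_mul_iff {p : ℕ} (hp : p ≠ 0) (hcop : N.Coprime p)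
    {m₀ h : ℝ → ℂ} (hm : Function.Periodic m₀ 1) (hh : Function.Periodic h 1) :
    ruelle N (fun y => m₀ (p * y)) (fun y => h (p * y)) =ᵐ[volume] (fun y => h (p * y)) ↔
      ruelle N m₀ h =ᵐ[volume] h := by
  rw [ruelle_comp_mul hcop hm hh]
  exact ae_eq_comp_mul_left_iff (Nat.cast_ne_zero.2 hp)

end Ruelle

theorem stmt17_general (N p : ℕ) (hp : 2 ≤ p) (hcop : Nat.Coprime N p)
    (m₀ : ℝ → ℂ) (hmper : Function.Periodic m₀ 1)
    (f : ℝ → ℂ) (hfm : Measurable f)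
    (hfi : IntegrableOn f (Set.Ioc (0:ℝ) 1)) :
    (ruelle N (fun x => m₀ (p * x)) f =ᵐ[volume] f ∧
        (fun x => f (x + 1 / p)) =ᵐ[volume] f)
      ↔ ∃ h : ℝ → ℂ, Measurable h ∧ Function.Periodic h 1 ∧
          IntegrableOn h (Set.Ioc (0:ℝ) 1) ∧
          ruelle N m₀ h =ᵐ[volume] h ∧
          f =ᵐ[volume] fun x => h (p * x) := by
  have hp0 : p ≠ 0 := by omega
  constructor
  · rintro ⟨hR, hτ⟩
    set h : ℝ → ℂ := fun y => f (Int.fract y / p)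
    have hh : Function.Periodic h 1 := fun y => by simp only [h, Int.fract_add_one]
    have hf : f =ᵐ[volume] fun x => h (p * x) :=
      ae_eq_comp_fract_div_of_comp_add_ae_eq_self (Nat.cast_ne_zero.2 hp0) hτ
    refine ⟨h, hfm.comp (measurable_fract.div_const _), hh,
      integrableOn_comp_fract_div (by exact_mod_cast hp.trans' one_le_two) hfi, ?_, hf⟩
    rwa [← ruelle_fixed_comp_mul_iff hp0 hcop hmper hh, ← ruelle_fixed_congr_ae _ hf]
  · rintro ⟨h, -, hh, -, hRh, hf⟩
    exact ⟨(ruelle_fixed_congr_ae _ hf).2 ((ruelle_fixed_comp_mul_iff hp0 hcop hmper hh).2 hRh),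
      comp_add_one_div_ae_eq_self_of_ae_eq_comp_mul (Nat.cast_ne_zero.2 hp0) hh hf⟩

/-- reciprocity of eigenspaces, `V_p^{τ_p} = V₀(z^p)`:
an `f ∈ L¹(𝕋)` satisfies `R_p f = f` and `τ_p f = f` iff `f(z) = h(z^p)`
for some `h ∈ L¹(𝕋)` with `R₀ h = h`. Here `m_p(z) = m₀(z^p)` and
`τ_p f(z) = f(e^{2πi/p}z)` (additively, translation by `1/p`). -/
theorem stmt17 (N p : ℕ) (hN : 2 ≤ N) (hp : 2 ≤ p) (hcop : Nat.Coprime N p)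
    (m₀ : ℝ → ℂ) (hm : Measurable m₀) (hmper : Function.Periodic m₀ 1)
    (hmb : ∃ C, ∀ᵐ x ∂volume, ‖m₀ x‖ ≤ C)
    (f : ℝ → ℂ) (hfm : Measurable f) (hfper : Function.Periodic f 1)
    (hfi : IntegrableOn f (Set.Ioc (0:ℝ) 1)) :
    (ruelle N (fun x => m₀ (p * x)) f =ᵐ[volume] f ∧
        (fun x => f (x + 1 / p)) =ᵐ[volume] f)
      ↔ ∃ h : ℝ → ℂ, Measurable h ∧ Function.Periodic h 1 ∧
          IntegrableOn h (Set.Ioc (0:ℝ) 1) ∧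
          ruelle N m₀ h =ᵐ[volume] h ∧
          f =ᵐ[volume] fun x => h (p * x) :=
  stmt17_general N p hp hcop m₀ hmper f hfm hfi
end
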